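/- Let n ≥ 5 be an integer and let N = Z/4Z × Z/2^{n-2}Z. Then Hol(N) contains no regular subgroup isomorphic to the generalised quaternion group Q_{2^n} (QuaternionGroup 2^{n-2}) and no regular subgroup isomorphic to the dihedral group D_{2^n} (DihedralGroup 2^{n-1}). -/

import Mathlib

/-- The (multiplicative) automorphism group structure on `AddAut N`, as in the older Mathlib. -/
instance AddAut.instGroupOld (A : Type) [Add A] : Group (AddAut A) where
  mul g h := AddEquiv.trans h g
  one := AddEquiv.refl _
  inv := AddEquiv.symm
  mul_assoc _ _ _ := rfl
  one_mul _ := rfl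
  mul_one _ := rfl
  inv_mul_cancel := AddEquiv.self_trans_symm

/-- The natural action of `AddAut N` on `Multiplicative N`. -/
def holPhi (N : Type) [AddCommGroup N] : AddAut N →* MulAut (Multiplicative N) where
  toFun f := AddEquiv.toMultiplicative f
  map_one' := by ext x; rfl
  map_mul' f g := by ext x; rfl

/-- The holomorph of an abelian group `N`, i.e. the semidirect product `N ⋊ Aut(N)`. -/
abbrev Hol (N : Type) [AddCommGroup N] :=
  SemidirectProduct (Multiplicative N) (AddAut N) (holPhi N)

/-- The action of the holomorph on `N`: `(v, A) • x = v + A x`. -/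
def holSmul {N : Type} [AddCommGroup N] (g : Hol N) (x : N) : N :=
  (Multiplicative.toAdd g.left) + g.right x

/-- A subgroup of `Hol N` is regular if its action on `N` is simply transitive. -/
def IsRegularSubgroup {N : Type} [AddCommGroup N] (G : Subgroup (Hol N)) : Prop :=
  ∀ x y : N, ∃! g : G, holSmul (g : Hol N) x = y

/-!
For `g = (v, A)` in the holomorph of `N = ZMod 4 × ZMod (2 ^ m)`, the translation part of `g ^ k`
is `∑ i < k, A ^ i v`. Modulo `4N`, an automorphism `A` of `N` acts by a matrix `B` over `ZMod 4`
with even lower left entry (the image of `(1, 0)` has order dividing `4`), and every such `B`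
satisfies `B ^ 4 = 1` and maps everything into `2 • ZMod 4 × 0` under `1 + B + B ^ 2 + B ^ 3`.
By induction, the sum over `2 ^ (k + 2)` terms then lies in
`2 ^ (k + 1) • (ZMod 4 × 2 • ZMod (2 ^ m))`, which is `0` for `k = m - 2 ≥ 1`. So every
element of a regular subgroup has order dividing `2 ^ m`, whereas `Q_{2^n}` and `D_{2^n}`
(with `m = n - 2`) contain elements of order `2 ^ (m + 1)`.
-/

open Finset Matrix

theorem addAut_mul_apply {A : Type} [Add A] (f g : AddAut A) (x : A) : (f * g) x = f (g x) :=
  rfl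

theorem addAut_one_apply {A : Type} [Add A] (x : A) : (1 : AddAut A) x = x :=
  rfl

theorem sum_range_add_self_pow_apply {N : Type} [AddCommGroup N] (A : AddAut N) (k : ℕ)
    (x : N) :
    ∑ i ∈ range (k + k), (A ^ i) x =
      ∑ i ∈ range k, (A ^ i) x + (A ^ k) (∑ i ∈ range k, (A ^ i) x) := by
  simp only [sum_range_add, map_sum, pow_add, addAut_mul_apply]

section Holomorph

variable {N : Type} [AddCommGroup N]

theorem Hol.right_pow (g : Hol N) (k : ℕ) : (g ^ k).right = g.right ^ k :=
  map_pow SemidirectProduct.rightHom g k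

theorem Hol.toAdd_left_pow (g : Hol N) (k : ℕ) :
    Multiplicative.toAdd (g ^ k).left =
      ∑ i ∈ range k, (g.right ^ i) (Multiplicative.toAdd g.left) := by
  induction k with
  | zero => simp
  | succ k ih =>
    rw [pow_succ, SemidirectProduct.mul_left, toAdd_mul, ih, sum_range_succ, Hol.right_pow]
    rfl

theorem holSmul_zero (g : Hol N) : holSmul g 0 = Multiplicative.toAdd g.left := by
  simp [holSmul]

theorem IsRegularSubgroup.eq_one_of_holSmul_zero {G : Subgroup (Hol N)}
    (hG : IsRegularSubgroup G) {g : G} (hg : holSmul (g : Hol N) 0 = 0) : g = 1 := by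
  obtain ⟨u, -, hu⟩ := hG 0 0
  rw [hu g hg, hu 1 (by simp [holSmul_zero])]

theorem IsRegularSubgroup.pow_eq_one {G : Subgroup (Hol N)} (hG : IsRegularSubgroup G) {k : ℕ}
    (hk : ∀ (A : AddAut N) (v : N), ∑ i ∈ range k, (A ^ i) v = 0) (g : G) : g ^ k = 1 :=
  hG.eq_one_of_holSmul_zero (by
    rw [SubgroupClass.coe_pow, holSmul_zero, Hol.toAdd_left_pow, hk])

end Holomorph

section ReductionModFour

variable {q : ℕ}

def reduceModFour (hq : 4 ∣ q) : ZMod 4 × ZMod q →+ (Fin 2 → ZMod 4) where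
  toFun z := ![z.1, ZMod.castHom hq (ZMod 4) z.2]
  map_zero' := by ext i; fin_cases i <;> simp
  map_add' x y := by ext i; fin_cases i <;> simp [ZMod.cast_add hq]

theorem reduceModFour_apply (hq : 4 ∣ q) (z : ZMod 4 × ZMod q) :
    reduceModFour hq z = ![z.1, ZMod.castHom hq (ZMod 4) z.2] :=
  rfl

theorem exists_eq_four_nsmul_of_reduceModFour_eq_zero (hq : 4 ∣ q) {z : ZMod 4 × ZMod q}
    (hz : reduceModFour hq z = 0) : ∃ w, z = 4 • w := by
  have h1 : z.1 = 0 := congr_fun hz 0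
  have h2 := congr_fun hz 1
  simp only [reduceModFour_apply, ZMod.castHom_apply, Matrix.cons_val_one, Matrix.cons_val_zero,
    Pi.zero_apply] at h2
  rw [← ZMod.intCast_zmod_cast z.2, ZMod.cast_intCast hq,
    ZMod.intCast_zmod_eq_zero_iff_dvd] at h2
  obtain ⟨t, ht⟩ := h2
  refine ⟨(0, t), Prod.ext ?_ ?_⟩
  · simp [h1]
  · rw [← ZMod.intCast_zmod_cast z.2, ht, Prod.smul_snd, nsmul_eq_mul]
    push_cast
    ring

theorem reduceModFour_single (hq : 4 ∣ q) (j : Fin 2) :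
    reduceModFour hq (![(1, 0), (0, 1)] j) = Pi.single j 1 := by
  ext i; fin_cases i <;> fin_cases j <;> simp [reduceModFour_apply, ZMod.cast_one hq]

theorem addMonoidHom_ext_zmod_prod {p : ℕ} {M : Type*} [AddCommGroup M]
    {f g : ZMod p × ZMod q →+ M} (h1 : f (1, 0) = g (1, 0)) (h2 : f (0, 1) = g (0, 1)) :
    f = g := by
  ext z
  have hz : z = (z.1.cast : ℤ) • ((1, 0) : ZMod p × ZMod q) + (z.2.cast : ℤ) • (0, 1) := by
    ext <;> simp
  rw [hz, map_add, map_add, map_zsmul, map_zsmul, map_zsmul, map_zsmul, h1, h2]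

def modFourMatrix (hq : 4 ∣ q) (A : AddAut (ZMod 4 × ZMod q)) :
    Matrix (Fin 2) (Fin 2) (ZMod 4) :=
  Matrix.of fun i j => reduceModFour hq (A (![(1, 0), (0, 1)] j)) i

theorem reduceModFour_addAut_apply_basis (hq : 4 ∣ q) (A : AddAut (ZMod 4 × ZMod q))
    (j : Fin 2) :
    reduceModFour hq (A (![(1, 0), (0, 1)] j)) =
      modFourMatrix hq A *ᵥ reduceModFour hq (![(1, 0), (0, 1)] j) := by
  ext i
  simp [reduceModFour_single, modFourMatrix]

theorem reduceModFour_addAut_apply (hq : 4 ∣ q) (A : AddAut (ZMod 4 × ZMod q))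
    (z : ZMod 4 × ZMod q) :
    reduceModFour hq (A z) = modFourMatrix hq A *ᵥ reduceModFour hq z := by
  suffices (reduceModFour hq).comp A.toAddMonoidHom
      = (mulVecLin (modFourMatrix hq A)).toAddMonoidHom.comp (reduceModFour hq) from
    DFunLike.congr_fun this z
  apply addMonoidHom_ext_zmod_prod
  exacts [reduceModFour_addAut_apply_basis hq A 0, reduceModFour_addAut_apply_basis hq A 1]

theorem reduceModFour_pow_apply (hq : 4 ∣ q) (A : AddAut (ZMod 4 × ZMod q)) (k : ℕ)
    (z : ZMod 4 × ZMod q) :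
    reduceModFour hq ((A ^ k) z) = modFourMatrix hq A ^ k *ᵥ reduceModFour hq z := by
  induction k with
  | zero => simp [addAut_one_apply]
  | succ k ih =>
    rw [pow_succ', addAut_mul_apply, reduceModFour_addAut_apply, ih, mulVec_mulVec, pow_succ']

theorem isUnit_det_modFourMatrix (hq : 4 ∣ q) (A : AddAut (ZMod 4 × ZMod q)) :
    IsUnit (modFourMatrix hq A).det := by
  refine isUnit_det_of_right_inverse (B := modFourMatrix hq A⁻¹)
    (ext_of_mulVec_single fun j => ?_)
  rw [← mulVec_mulVec, ← reduceModFour_single, ← reduceModFour_addAut_apply,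
    ← reduceModFour_addAut_apply, one_mulVec]
  exact congrArg _ (A.apply_symm_apply _)

theorem two_mul_modFourMatrix_one_zero (hq : 8 ∣ q) (A : AddAut (ZMod 4 × ZMod q)) :
    2 * modFourMatrix (dvd_trans (by norm_num) hq) A 1 0 = 0 := by
  have h4 : (4 • (1, 0) : ZMod 4 × ZMod q) = 0 := by
    ext
    · show 4 • (1 : ZMod 4) = 0; decide
    · simp
  obtain ⟨Y, hY⟩ : ∃ Y : ℤ, (A (1, 0)).2 = Y := ⟨_, (ZMod.intCast_zmod_cast _).symm⟩
  have hqY : (q : ℤ) ∣ 4 * Y := by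
    rw [← ZMod.intCast_zmod_eq_zero_iff_dvd, Int.cast_mul, ← hY]
    simpa [nsmul_eq_mul, h4] using (congrArg Prod.snd (map_nsmul A 4 (1, 0))).symm
  have h8Y : (8 : ℤ) ∣ 4 * Y := dvd_trans (Int.natCast_dvd_natCast.mpr hq) hqY
  have : ((2 * Y : ℤ) : ZMod 4) = 0 := by
    rw [ZMod.intCast_zmod_eq_zero_iff_dvd]
    omega
  have hcast : ((Y : ZMod q).cast : ZMod 4) = Y :=
    ZMod.cast_intCast (dvd_trans (by norm_num) hq) Y
  simpa [modFourMatrix, reduceModFour_apply, hY, hcast] using this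

end ReductionModFour

/- The matrices below form the subgroup of `GL₂(ZMod 4)` that is upper unitriangular modulo `2`,
of order `32`; both facts about it are checked by enumeration. -/

theorem Matrix.pow_four_eq_one_of_two_mul_apply_one_zero (B : Matrix (Fin 2) (Fin 2) (ZMod 4))
    (hB : IsUnit B.det) (hc : 2 * B 1 0 = 0) : B ^ 4 = 1 := by
  have key : ∀ a b c d : ZMod 4, IsUnit (a * d - b * c) → 2 * c = 0 →
      !![a, b; c, d] ^ 4 = 1 := by
    decide
  rw [B.eta_fin_two]
  exact key _ _ _ _ (by rwa [det_fin_two] at hB) hc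

theorem Matrix.exists_sum_pow_mulVec_eq_of_two_mul_apply_one_zero
    (B : Matrix (Fin 2) (Fin 2) (ZMod 4)) (hB : IsUnit B.det) (hc : 2 * B 1 0 = 0)
    (v : Fin 2 → ZMod 4) : ∃ s, (∑ i ∈ range 4, B ^ i) *ᵥ v = ![2 * s, 0] := by
  have key : ∀ a b c d : ZMod 4, IsUnit (a * d - b * c) → 2 * c = 0 →
      ∀ v : Fin 2 → ZMod 4, ∃ s,
        (∑ i ∈ range 4, !![a, b; c, d] ^ i) *ᵥ v = ![2 * s, 0] := by
    decide
  rw [B.eta_fin_two]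
  exact key _ _ _ _ (by rwa [det_fin_two] at hB) hc v

section TwoPowerSums

variable {q : ℕ}

theorem exists_pow_four_mul_apply_eq_add (hq : 8 ∣ q) (A : AddAut (ZMod 4 × ZMod q)) (k : ℕ)
    (z : ZMod 4 × ZMod q) : ∃ w, (A ^ (4 * k)) z = z + 4 • w := by
  have h4 : 4 ∣ q := dvd_trans (by norm_num) hq
  have hB := (modFourMatrix h4 A).pow_four_eq_one_of_two_mul_apply_one_zero
    (isUnit_det_modFourMatrix h4 A) (two_mul_modFourMatrix_one_zero hq A)
  obtain ⟨w, hw⟩ := exists_eq_four_nsmul_of_reduceModFour_eq_zero h4 (z := (A ^ (4 * k)) z - z)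
    (by rw [map_sub, reduceModFour_pow_apply, pow_mul, hB, one_pow, one_mulVec, sub_self])
  exact ⟨w, by rw [← hw]; abel⟩

theorem exists_sum_range_four_pow_apply_eq (hq : 8 ∣ q) (A : AddAut (ZMod 4 × ZMod q))
    (x : ZMod 4 × ZMod q) :
    ∃ y : ZMod 4 × ZMod q, 2 ∣ y.2 ∧ ∑ i ∈ range 4, (A ^ i) x = 2 • y := by
  have h4 : 4 ∣ q := dvd_trans (by norm_num) hq
  obtain ⟨s, hs⟩ := (modFourMatrix h4 A).exists_sum_pow_mulVec_eq_of_two_mul_apply_one_zero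
    (isUnit_det_modFourMatrix h4 A) (two_mul_modFourMatrix_one_zero hq A) (reduceModFour h4 x)
  obtain ⟨w, hw⟩ := exists_eq_four_nsmul_of_reduceModFour_eq_zero h4
    (z := ∑ i ∈ range 4, (A ^ i) x - 2 • (s, 0)) (by
      rw [map_sub, map_sum]
      simp_rw [reduceModFour_pow_apply]
      rw [← sum_mulVec, hs, map_nsmul, reduceModFour_apply]
      ext i; fin_cases i <;> simp)
  refine ⟨(s, 0) + 2 • w, ?_, ?_⟩
  · simp [nsmul_eq_mul]
  · rw [sub_eq_iff_eq_add] at hw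
    rw [hw]
    module

/-- The sum over `2 ^ (k + 3)` terms is the sum over `2 ^ (k + 2)` terms plus its image under
`A ^ (2 ^ (k + 2))`, which is the identity modulo `4`. -/
theorem exists_sum_range_two_pow_pow_apply_eq (hq : 8 ∣ q) (A : AddAut (ZMod 4 × ZMod q))
    (k : ℕ) (x : ZMod 4 × ZMod q) :
    ∃ y : ZMod 4 × ZMod q,
      2 ∣ y.2 ∧ ∑ i ∈ range (2 ^ (k + 2)), (A ^ i) x = 2 ^ (k + 1) • y := by
  induction k with
  | zero => exact exists_sum_range_four_pow_apply_eq hq A x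
  | succ k ih =>
    obtain ⟨y, hy, hsum⟩ := ih
    obtain ⟨w, hw⟩ := exists_pow_four_mul_apply_eq_add hq A (2 ^ k) y
    refine ⟨y + 2 • w, dvd_add hy (by simp [nsmul_eq_mul]), ?_⟩
    rw [pow_succ, mul_two, sum_range_add_self_pow_apply, hsum, map_nsmul,
      show 2 ^ (k + 2) = 4 * 2 ^ k by ring, hw]
    module

end TwoPowerSums

theorem sum_range_two_pow_pow_apply_eq_zero {m : ℕ} (hm : 3 ≤ m)
    (A : AddAut (ZMod 4 × ZMod (2 ^ m))) (x : ZMod 4 × ZMod (2 ^ m)) :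
    ∑ i ∈ range (2 ^ m), (A ^ i) x = 0 := by
  obtain ⟨k, rfl⟩ : ∃ k, m = k + 3 := ⟨m - 3, by omega⟩
  obtain ⟨y, ⟨t, ht⟩, hsum⟩ :=
    exists_sum_range_two_pow_pow_apply_eq ⟨2 ^ k, by ring⟩ A (k + 1) x
  rw [hsum]
  ext
  · rw [Prod.smul_fst, Prod.fst_zero, nsmul_eq_mul, show 2 ^ (k + 1 + 1) = 4 * 2 ^ k by ring]
    push_cast
    rw [show (4 : ZMod 4) = 0 from rfl, zero_mul, zero_mul]
  · rw [Prod.smul_snd, Prod.snd_zero, ht, nsmul_eq_mul, ← mul_assoc]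
    norm_cast
    rw [← pow_succ, ZMod.natCast_self, zero_mul]

/-- Proposition 7.2: for `n ≥ 5`, the holomorph of `C₄ × C_{2^{n-2}}` contains no
regular quaternion and no regular dihedral subgroup of order `2 ^ n`. -/
theorem no_regular_quaternion_or_dihedral_subgroup_C4_x_C2pow (n : ℕ) (hn : 5 ≤ n) :
    (¬ ∃ G : Subgroup (Hol (ZMod 4 × ZMod (2 ^ (n - 2)))),
      IsRegularSubgroup G ∧ Nonempty (G ≃* QuaternionGroup (2 ^ (n - 2)))) ∧
    (¬ ∃ G : Subgroup (Hol (ZMod 4 × ZMod (2 ^ (n - 2)))),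
      IsRegularSubgroup G ∧ Nonempty (G ≃* DihedralGroup (2 ^ (n - 1)))) := by
  have horder {G : Subgroup (Hol (ZMod 4 × ZMod (2 ^ (n - 2))))} (hG : IsRegularSubgroup G)
      (g : G) : orderOf g ∣ 2 ^ (n - 2) :=
    orderOf_dvd_of_pow_eq_one (hG.pow_eq_one (sum_range_two_pow_pow_apply_eq_zero (by omega)) g)
  have hlt : ¬ 2 ^ (n - 1) ∣ 2 ^ (n - 2) :=
    Nat.pow_dvd_pow_iff_le_right'.not.mpr (by omega)
  constructor
  · rintro ⟨G, hG, ⟨e⟩⟩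
    have h := horder hG (e.symm (QuaternionGroup.a 1))
    rw [MulEquiv.orderOf_eq, QuaternionGroup.orderOf_a_one, ← pow_succ'] at h
    exact hlt (by rwa [show n - 2 + 1 = n - 1 by omega] at h)
  · rintro ⟨G, hG, ⟨e⟩⟩
    have h := horder hG (e.symm (DihedralGroup.r 1))
    rw [MulEquiv.orderOf_eq, DihedralGroup.orderOf_r_one] at h
    exact hlt h
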